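/- arXiv:2004.07895 — 2 statements merged into one kernel-verified Lean document; each statement's English description precedes it below -/
import Mathlib

section
/- Let d ≥ 1, let Ω ⊂ ℝ^d be a bounded convex open set with positive Lebesgue measure, and let δ > 0. Then there exists a constant C > 0, depending only on Ω and δ, such that for every continuously differentiable function g : Ω → ℝ and every K ∈ ℝ with |{x ∈ Ω : g(x) ≤ K}| ≥ δ, one has ∫_Ω ((g(x) − K)₊)² dx ≤ C ∫_Ω |∇g(x)|² dx. -/
/-!
For `x ∈ Ω` and `y` in the sublevel set `S = {g ≤ K}` we have `(g x - K)₊ ≤ |g x - g y|`, and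
integrating `∇g` along the segment from `y` to `x` gives, by Cauchy–Schwarz and Jensen,
`(g x - g y)² ≤ d · diam(Ω)² · ∫₀¹ |∇g|²(y + t(x - y)) dt`. Integrating over `y ∈ S` and `x ∈ Ω`,
for fixed `t` the point `y + t(x - y) = (1 - t) y + t x` depends on whichever of `x`, `y` carries
weight `≥ 1/2` through an affine map of Jacobian `≥ 2⁻ᵈ`, so
`|S| ∫_Ω (g - K)₊² ≤ d · diam(Ω)² · 2ᵈ · |Ω| · ∫_Ω |∇g|²`, and `|S| ≥ δ`.
-/

open MeasureTheory Module Set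
open scoped ENNReal

theorem sq_lintegral_le_lintegral_sq {α : Type*} [MeasurableSpace α] {μ : Measure α}
    [IsProbabilityMeasure μ] {f : α → ℝ≥0∞} (hf : AEMeasurable f μ) :
    (∫⁻ a, f a ∂μ) ^ 2 ≤ ∫⁻ a, f a ^ 2 ∂μ := by
  have hHolder := ENNReal.lintegral_mul_le_Lp_mul_Lq μ Real.HolderConjugate.two_two hf
    aemeasurable_const (g := fun _ => 1)
  simp only [Pi.mul_apply, mul_one, ENNReal.one_rpow, lintegral_const, measure_univ]
    at hHolder
  calc (∫⁻ a, f a ∂μ) ^ 2 ≤ ((∫⁻ a, f a ^ (2 : ℝ) ∂μ) ^ (1 / 2 : ℝ)) ^ 2 := by gcongr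
    _ = ∫⁻ a, f a ^ 2 ∂μ := by
      rw [← ENNReal.rpow_natCast, ← ENNReal.rpow_mul]
      norm_num

theorem sq_apply_le_sum_sq_mul_sum_sq {ι : Type*} [Fintype ι] [DecidableEq ι]
    (L : (ι → ℝ) →L[ℝ] ℝ) (v : ι → ℝ) :
    L v ^ 2 ≤ (∑ i, v i ^ 2) * ∑ i, L (Pi.single i 1) ^ 2 := by
  have hL : L v = ∑ i, v i * L (Pi.single i 1) := by
    have hsingle : ∀ i : ι, (fun j => if i = j then (1 : ℝ) else 0) = Pi.single i 1 :=
      fun i => funext fun j => by simp only [Pi.single_apply, eq_comm]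
    simpa [hsingle] using L.toLinearMap.pi_apply_eq_sum_univ v
  rw [hL]
  exact Finset.sum_mul_sq_le_sq_mul_sq _ _ _

section Haar

variable {E : Type*} [NormedAddCommGroup E] [NormedSpace ℝ E] [FiniteDimensional ℝ E]
  [MeasurableSpace E] [BorelSpace E] (μ : Measure E) [μ.IsAddHaarMeasure]

theorem lintegral_comp_add_smul (f : E → ℝ≥0∞) (c : E) {s : ℝ} (hs : s ≠ 0) :
    ∫⁻ x, f (c + s • x) ∂μ = ENNReal.ofReal |(s ^ finrank ℝ E)⁻¹| * ∫⁻ x, f x ∂μ := by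
  have := lintegral_map_equiv (μ := μ) (fun x => f (c + x)) (MeasurableEquiv.smul₀ s hs)
  rw [MeasurableEquiv.coe_smul₀, Measure.map_addHaar_smul μ hs, lintegral_smul_measure,
    lintegral_add_left_eq_self, smul_eq_mul] at this
  exact this.symm

theorem lintegral_comp_add_smul_le (f : E → ℝ≥0∞) (c : E) {s : ℝ} (hs : 1 / 2 ≤ s) :
    ∫⁻ x, f (c + s • x) ∂μ ≤ 2 ^ finrank ℝ E * ∫⁻ x, f x ∂μ := by
  have hs0 : 0 < s := by linarith
  rw [lintegral_comp_add_smul μ f c hs0.ne', ← inv_pow, abs_of_pos (by positivity),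
    ENNReal.ofReal_pow (by positivity)]
  gcongr
  rw [← ENNReal.ofReal_ofNat 2]
  exact ENNReal.ofReal_le_ofReal (by rw [inv_le_comm₀ hs0 two_pos]; linarith)

theorem lintegral_lintegral_comp_segment_le (f : E → ℝ≥0∞) (hf : Measurable f) (Ω : Set E)
    (t : ℝ) :
    ∫⁻ x in Ω, ∫⁻ y in Ω, f (y + t • (x - y)) ∂μ ∂μ ≤ 2 ^ finrank ℝ E * μ Ω * ∫⁻ z, f z ∂μ := by
  have hbound : ∀ (c : E) (s : ℝ), 1 / 2 ≤ s →
      ∫⁻ x in Ω, f (c + s • x) ∂μ ≤ 2 ^ finrank ℝ E * ∫⁻ z, f z ∂μ := fun c s hs =>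
    (setLIntegral_le_lintegral _ _).trans (lintegral_comp_add_smul_le μ f c hs)
  have hconst : ∫⁻ _ in Ω, 2 ^ finrank ℝ E * ∫⁻ z, f z ∂μ ∂μ =
      2 ^ finrank ℝ E * μ Ω * ∫⁻ z, f z ∂μ := by
    rw [setLIntegral_const]; ring
  rcases le_total (1 / 2) t with ht | ht
  · rw [lintegral_lintegral_swap (f := fun x y => f (y + t • (x - y)))
      (hf.comp (by fun_prop)).aemeasurable, ← hconst]
    have hcomb : ∀ x y : E, y + t • (x - y) = (1 - t) • y + t • x := fun x y => by module
    simp_rw [hcomb]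
    exact lintegral_mono fun y => hbound _ t ht
  · have hcomb : ∀ x y : E, y + t • (x - y) = t • x + (1 - t) • y := fun x y => by module
    simp_rw [hcomb, ← hconst]
    exact lintegral_mono fun x => hbound _ (1 - t) (by linarith)

theorem lintegral_lintegral_lintegral_segment_le (f : E → ℝ≥0∞) (hf : Measurable f)
    (Ω : Set E) :
    ∫⁻ x in Ω, ∫⁻ y in Ω, ∫⁻ t in Ioc (0 : ℝ) 1, f (y + t • (x - y)) ∂volume ∂μ ∂μ ≤
      2 ^ finrank ℝ E * μ Ω * ∫⁻ z, f z ∂μ := by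
  have hswap : ∀ x, ∫⁻ y in Ω, ∫⁻ t in Ioc (0 : ℝ) 1, f (y + t • (x - y)) ∂volume ∂μ =
      ∫⁻ t in Ioc (0 : ℝ) 1, ∫⁻ y in Ω, f (y + t • (x - y)) ∂μ := fun x =>
    lintegral_lintegral_swap (f := fun y (t : ℝ) => f (y + t • (x - y)))
      (hf.comp (by fun_prop)).aemeasurable
  have hmeas : Measurable fun p : E × ℝ => ∫⁻ y in Ω, f (y + p.2 • (p.1 - y)) ∂μ :=
    Measurable.lintegral_prod_right'
      (f := fun q : (E × ℝ) × E => f (q.2 + q.1.2 • (q.1.1 - q.2))) (hf.comp (by fun_prop))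
  calc ∫⁻ x in Ω, ∫⁻ y in Ω, ∫⁻ t in Ioc (0 : ℝ) 1, f (y + t • (x - y)) ∂volume ∂μ ∂μ
      = ∫⁻ t in Ioc (0 : ℝ) 1, ∫⁻ x in Ω, ∫⁻ y in Ω, f (y + t • (x - y)) ∂μ ∂μ := by
        simp_rw [hswap]
        exact lintegral_lintegral_swap hmeas.aemeasurable
    _ ≤ ∫⁻ t in Ioc (0 : ℝ) 1, 2 ^ finrank ℝ E * μ Ω * ∫⁻ z, f z ∂μ :=
        lintegral_mono fun t => lintegral_lintegral_comp_segment_le μ f hf Ω t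
    _ = 2 ^ finrank ℝ E * μ Ω * ∫⁻ z, f z ∂μ := by simp

theorem Convex.lintegral_lintegral_lintegral_segment_le {Ω : Set E} (hΩ : Convex ℝ Ω)
    (hΩm : MeasurableSet Ω) (f : E → ℝ≥0∞) (hf : Measurable f) :
    ∫⁻ x in Ω, ∫⁻ y in Ω, ∫⁻ t in Ioc (0 : ℝ) 1, f (y + t • (x - y)) ∂volume ∂μ ∂μ ≤
      2 ^ finrank ℝ E * μ Ω * ∫⁻ z in Ω, f z ∂μ := by
  have hsegment : ∀ x ∈ Ω, ∀ y ∈ Ω, ∀ t ∈ Ioc (0 : ℝ) 1,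
      f (y + t • (x - y)) = Ω.indicator f (y + t • (x - y)) := fun x hx y hy t ht =>
    (indicator_of_mem (hΩ.add_smul_sub_mem hy hx (Ioc_subset_Icc_self ht)) f).symm
  calc ∫⁻ x in Ω, ∫⁻ y in Ω, ∫⁻ t in Ioc (0 : ℝ) 1, f (y + t • (x - y)) ∂volume ∂μ ∂μ
      = ∫⁻ x in Ω, ∫⁻ y in Ω, ∫⁻ t in Ioc (0 : ℝ) 1,
          Ω.indicator f (y + t • (x - y)) ∂volume ∂μ ∂μ :=
        setLIntegral_congr_fun hΩm fun x hx => setLIntegral_congr_fun hΩm fun y hy =>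
          setLIntegral_congr_fun measurableSet_Ioc (hsegment x hx y hy)
    _ ≤ 2 ^ finrank ℝ E * μ Ω * ∫⁻ z in Ω, f z ∂μ := by
        rw [← lintegral_indicator hΩm f]
        exact _root_.lintegral_lintegral_lintegral_segment_le μ _ (hf.indicator hΩm) Ω

end Haar

section Segment

variable {E F : Type*} [NormedAddCommGroup E] [NormedSpace ℝ E] [NormedAddCommGroup F]
  [NormedSpace ℝ F] {Ω : Set E} {g : E → F} {x y : E}

theorem ContDiffOn.continuousOn_fderiv_segment (hΩ : Convex ℝ Ω) (hΩo : IsOpen Ω)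
    (hg : ContDiffOn ℝ 1 g Ω) (hx : x ∈ Ω) (hy : y ∈ Ω) :
    ContinuousOn (fun t : ℝ => fderiv ℝ g (y + t • (x - y))) (Icc 0 1) :=
  (hg.continuousOn_fderiv_of_isOpen hΩo le_rfl).comp (by fun_prop)
    fun _ ht => hΩ.add_smul_sub_mem hy hx ht

theorem ContDiffOn.sub_eq_integral_fderiv_segment [CompleteSpace F] (hΩ : Convex ℝ Ω)
    (hΩo : IsOpen Ω) (hg : ContDiffOn ℝ 1 g Ω) (hx : x ∈ Ω) (hy : y ∈ Ω) :
    g x - g y = ∫ t in (0 : ℝ)..1, fderiv ℝ g (y + t • (x - y)) (x - y) := by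
  have hderiv : ∀ t ∈ uIcc (0 : ℝ) 1,
      HasDerivAt (fun t : ℝ => g (y + t • (x - y))) (fderiv ℝ g (y + t • (x - y)) (x - y)) t := by
    intro t ht
    rw [uIcc_of_le zero_le_one] at ht
    have hdiff : DifferentiableAt ℝ g (y + t • (x - y)) :=
      (hg.differentiableOn one_ne_zero).differentiableAt
        (hΩo.mem_nhds (hΩ.add_smul_sub_mem hy hx ht))
    simpa [Function.comp_def] using hdiff.hasFDerivAt.comp_hasDerivAt t
      (((hasDerivAt_id t).smul_const (x - y)).const_add y)
  have hint : IntervalIntegrable (fun t : ℝ => fderiv ℝ g (y + t • (x - y)) (x - y)) volume 0 1 :=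
    ((hg.continuousOn_fderiv_segment hΩ hΩo hx hy).clm_apply
      continuousOn_const).intervalIntegrable_of_Icc zero_le_one
  rw [intervalIntegral.integral_eq_sub_of_hasDerivAt hderiv hint]
  simp

end Segment

section Coordinates

variable {ι : Type*} [Fintype ι]

theorem sum_sq_sub_le_card_mul_diam_sq {Ω : Set (ι → ℝ)} (hΩ : Bornology.IsBounded Ω)
    {x y : ι → ℝ} (hx : x ∈ Ω) (hy : y ∈ Ω) :
    ∑ i, (x i - y i) ^ 2 ≤ Fintype.card ι * Metric.diam Ω ^ 2 := by
  have hcoord : ∀ i, (x i - y i) ^ 2 ≤ Metric.diam Ω ^ 2 := fun i => by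
    rw [← sq_abs, ← Real.dist_eq]
    gcongr
    exact (dist_le_pi_dist x y i).trans (Metric.dist_le_diam_of_mem hΩ hx hy)
  simpa using Finset.sum_le_sum fun i (_ : i ∈ Finset.univ) => hcoord i

variable [DecidableEq ι]

noncomputable def gradNormSq (g : (ι → ℝ) → ℝ) (x : ι → ℝ) : ℝ :=
  ∑ i, fderiv ℝ g x (Pi.single i 1) ^ 2

theorem measurable_gradNormSq (g : (ι → ℝ) → ℝ) : Measurable (gradNormSq g) :=
  Finset.measurable_sum _ fun _ _ => (measurable_fderiv_apply_const ℝ g _).pow_const 2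

theorem ContDiffOn.sq_sub_le_lintegral_gradNormSq {Ω : Set (ι → ℝ)} (hΩ : Convex ℝ Ω)
    (hΩo : IsOpen Ω) {g : (ι → ℝ) → ℝ} (hg : ContDiffOn ℝ 1 g Ω) {x y : ι → ℝ} (hx : x ∈ Ω)
    (hy : y ∈ Ω) :
    ENNReal.ofReal ((g x - g y) ^ 2) ≤ ENNReal.ofReal (∑ i, (x i - y i) ^ 2) *
      ∫⁻ t in Ioc (0 : ℝ) 1, ENNReal.ofReal (gradNormSq g (y + t • (x - y))) := by
  set D : ℝ → ℝ := fun t => fderiv ℝ g (y + t • (x - y)) (x - y)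
  have : IsProbabilityMeasure (volume.restrict (Ioc (0 : ℝ) 1)) := ⟨by simp⟩
  have hD : AEMeasurable (fun t => ‖D t‖ₑ) (volume.restrict (Ioc 0 1)) :=
    ((((hg.continuousOn_fderiv_segment hΩ hΩo hx hy).clm_apply continuousOn_const).mono
      Ioc_subset_Icc_self).aestronglyMeasurable measurableSet_Ioc).enorm
  have hofReal_sq : ∀ a : ℝ, ENNReal.ofReal (a ^ 2) = ‖a‖ₑ ^ 2 := fun a => by
    rw [Real.enorm_eq_ofReal_abs, ← ENNReal.ofReal_pow (abs_nonneg a), sq_abs]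
  calc ENNReal.ofReal ((g x - g y) ^ 2) = ‖∫ t in Ioc (0 : ℝ) 1, D t‖ₑ ^ 2 := by
        rw [hg.sub_eq_integral_fderiv_segment hΩ hΩo hx hy,
          intervalIntegral.integral_of_le zero_le_one, hofReal_sq]
    _ ≤ (∫⁻ t in Ioc (0 : ℝ) 1, ‖D t‖ₑ) ^ 2 := by
        gcongr
        exact enorm_integral_le_lintegral_enorm _
    _ ≤ ∫⁻ t in Ioc (0 : ℝ) 1, ‖D t‖ₑ ^ 2 := sq_lintegral_le_lintegral_sq hD
    _ ≤ ∫⁻ t in Ioc (0 : ℝ) 1, ENNReal.ofReal (∑ i, (x i - y i) ^ 2) *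
          ENNReal.ofReal (gradNormSq g (y + t • (x - y))) := by
        refine lintegral_mono fun t => ?_
        rw [← hofReal_sq, ← ENNReal.ofReal_mul (Finset.sum_nonneg fun i _ => sq_nonneg _)]
        exact ENNReal.ofReal_le_ofReal (sq_apply_le_sum_sq_mul_sum_sq _ _)
    _ = _ := lintegral_const_mul' _ _ ENNReal.ofReal_ne_top

theorem ContDiffOn.measure_sublevel_mul_lintegral_sq_posPart_le {Ω : Set (ι → ℝ)}
    (hΩb : Bornology.IsBounded Ω) (hΩ : Convex ℝ Ω) (hΩo : IsOpen Ω) {g : (ι → ℝ) → ℝ}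
    (hg : ContDiffOn ℝ 1 g Ω) (K : ℝ) :
    volume {x ∈ Ω | g x ≤ K} * ∫⁻ x in Ω, ENNReal.ofReal (max (g x - K) 0 ^ 2) ≤
      ENNReal.ofReal (Fintype.card ι * Metric.diam Ω ^ 2) * 2 ^ Fintype.card ι * volume Ω *
        ∫⁻ x in Ω, ENNReal.ofReal (gradNormSq g x) := by
  set S := {x ∈ Ω | g x ≤ K}
  set A := ENNReal.ofReal (Fintype.card ι * Metric.diam Ω ^ 2)
  have hA : A ≠ ⊤ := ENNReal.ofReal_ne_top
  have hS : MeasurableSet S := by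
    have hSeq : S = Ω \ (Ω ∩ g ⁻¹' Ioi K) := by ext; simp [S]
    rw [hSeq]
    exact hΩo.measurableSet.diff
      (hg.continuousOn.isOpen_inter_preimage hΩo isOpen_Ioi).measurableSet
  have hpoint : ∀ x ∈ Ω, ∀ y ∈ S, ENNReal.ofReal (max (g x - K) 0 ^ 2) ≤
      A * ∫⁻ t in Ioc (0 : ℝ) 1, ENNReal.ofReal (gradNormSq g (y + t • (x - y))) := by
    rintro x hx y ⟨hyΩ, hyK⟩
    have hpos : max (g x - K) 0 ^ 2 ≤ (g x - g y) ^ 2 := by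
      rw [← sq_abs (g x - g y)]
      gcongr
      exact max_le (by linarith [le_abs_self (g x - g y)]) (abs_nonneg _)
    calc ENNReal.ofReal (max (g x - K) 0 ^ 2) ≤ ENNReal.ofReal ((g x - g y) ^ 2) :=
          ENNReal.ofReal_le_ofReal hpos
      _ ≤ _ := hg.sq_sub_le_lintegral_gradNormSq hΩ hΩo hx hyΩ
      _ ≤ _ := by
          gcongr
          exact ENNReal.ofReal_le_ofReal (sum_sq_sub_le_card_mul_diam_sq hΩb hx hyΩ)
  calc volume S * ∫⁻ x in Ω, ENNReal.ofReal (max (g x - K) 0 ^ 2)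
      = ∫⁻ x in Ω, ∫⁻ _ in S, ENNReal.ofReal (max (g x - K) 0 ^ 2) := by
        simp_rw [setLIntegral_const]
        rw [lintegral_mul_const' _ _ (hΩb.subset (sep_subset _ _)).measure_lt_top.ne, mul_comm]
    _ ≤ ∫⁻ x in Ω, ∫⁻ y in Ω, A * ∫⁻ t in Ioc (0 : ℝ) 1,
          ENNReal.ofReal (gradNormSq g (y + t • (x - y))) :=
        setLIntegral_mono' hΩo.measurableSet fun x hx =>
          (setLIntegral_mono' hS (hpoint x hx)).trans (lintegral_mono_set fun _ hy => hy.1)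
    _ = A * ∫⁻ x in Ω, ∫⁻ y in Ω, ∫⁻ t in Ioc (0 : ℝ) 1,
          ENNReal.ofReal (gradNormSq g (y + t • (x - y))) := by
        simp_rw [lintegral_const_mul' _ _ hA]
    _ ≤ A * (2 ^ Fintype.card ι * volume Ω * ∫⁻ x in Ω, ENNReal.ofReal (gradNormSq g x)) := by
        gcongr
        simpa using hΩ.lintegral_lintegral_lintegral_segment_le volume hΩo.measurableSet _
          (measurable_gradNormSq g).ennreal_ofReal
    _ = _ := by ring

end Coordinates

theorem stmt6_general (d : ℕ) (Ω : Set (Fin d → ℝ))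
    (hbdd : Bornology.IsBounded Ω) (hconv : Convex ℝ Ω) (hopen : IsOpen Ω)
    (δ : ℝ) (hδ : 0 < δ) :
    ∃ C > (0:ℝ), ∀ (g : (Fin d → ℝ) → ℝ) (K : ℝ),
      ContDiffOn ℝ 1 g Ω →
      ENNReal.ofReal δ ≤ volume {x ∈ Ω | g x ≤ K} →
      ∫⁻ x in Ω, ENNReal.ofReal ((max (g x - K) 0) ^ 2) ≤
        ENNReal.ofReal C *
          ∫⁻ x in Ω, ENNReal.ofReal (∑ i, (fderiv ℝ g x (Pi.single i 1)) ^ 2) := by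
  set M := ENNReal.ofReal (Fintype.card (Fin d) * Metric.diam Ω ^ 2) * 2 ^ Fintype.card (Fin d) *
    volume Ω
  have hM : M ≠ ⊤ := by
    have := hbdd.measure_lt_top (μ := volume)
    finiteness
  refine ⟨M.toReal / δ + 1, by positivity, fun g K hg hK => ?_⟩
  have hδ0 : ENNReal.ofReal δ ≠ 0 := (ENNReal.ofReal_pos.2 hδ).ne'
  calc ∫⁻ x in Ω, ENNReal.ofReal (max (g x - K) 0 ^ 2)
      = (ENNReal.ofReal δ)⁻¹ *
          (ENNReal.ofReal δ * ∫⁻ x in Ω, ENNReal.ofReal (max (g x - K) 0 ^ 2)) := by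
        rw [← mul_assoc, ENNReal.inv_mul_cancel hδ0 ENNReal.ofReal_ne_top, one_mul]
    _ ≤ (ENNReal.ofReal δ)⁻¹ * (M * ∫⁻ x in Ω, ENNReal.ofReal (gradNormSq g x)) :=
        mul_le_mul_right ((mul_le_mul_left hK _).trans
          (hg.measure_sublevel_mul_lintegral_sq_posPart_le hbdd hconv hopen K)) _
    _ = ENNReal.ofReal (M.toReal / δ) * ∫⁻ x in Ω, ENNReal.ofReal (gradNormSq g x) := by
        rw [ENNReal.ofReal_div_of_pos hδ, ENNReal.ofReal_toReal hM, ENNReal.div_eq_inv_mul,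
          ← mul_assoc]
    _ ≤ _ := mul_le_mul_left (ENNReal.ofReal_le_ofReal (by linarith)) _

/-- On a bounded convex open set `Ω ⊂ ℝ^d` of positive measure, for every
`δ > 0` there is `C > 0` such that for every `C¹` function `g` and every level `K` with
`|{g ≤ K}| ≥ δ`, one has `∫_Ω ((g − K)₊)² ≤ C ∫_Ω |∇g|²`. -/
theorem stmt6 (d : ℕ) (hd : 1 ≤ d) (Ω : Set (Fin d → ℝ))
    (hbdd : Bornology.IsBounded Ω) (hconv : Convex ℝ Ω) (hopen : IsOpen Ω)
    (hvol : 0 < volume Ω) (δ : ℝ) (hδ : 0 < δ) :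
    ∃ C > (0:ℝ), ∀ (g : (Fin d → ℝ) → ℝ) (K : ℝ),
      ContDiffOn ℝ 1 g Ω →
      ENNReal.ofReal δ ≤ volume {x ∈ Ω | g x ≤ K} →
      ∫⁻ x in Ω, ENNReal.ofReal ((max (g x - K) 0) ^ 2) ≤
        ENNReal.ofReal C *
          ∫⁻ x in Ω, ENNReal.ofReal (∑ i, (fderiv ℝ g x (Pi.single i 1)) ^ 2) :=
  stmt6_general d Ω hbdd hconv hopen δ hδ
end

section
/- Let μ : [0,∞) → ℝ be continuous on [0,∞) and continuously differentiable on (0,∞) with μ(ρ) > 0 and μ'(ρ) > 0 for every ρ > 0, satisfying the vacuum condition with exponent α ∈ (2/3, 4]. Then there exist σ > 0, C > 0 and ρ₀ > 0 such that for all ρ ∈ (0, ρ₀]: √(μ(ρ)) μ'(ρ)/ρ ≥ C ρ^{σ−1}. -/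
/-!
Near `0` the vacuum condition traps `ρ μ'(ρ) / μ(ρ)` between `α / 2` and `2α`. The upper bound
makes `μ(ρ) ρ^(-2α)` nonincreasing, so `μ(ρ) ≥ c ρ^(2α)`; the lower bound gives
`μ'(ρ) ≥ (α / 2) μ(ρ) / ρ`. Hence `√μ μ' / ρ ≥ (α / 2) c^(3/2) ρ^(3α - 2)`, i.e. `σ = 3α - 1 > 0`.
-/

open Filter Set Real Topology

theorem exists_forall_Ioc_mul_le_mul_deriv_le {f : ℝ → ℝ} {α a b : ℝ}
    (hpos : ∀ x > (0:ℝ), 0 < f x)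
    (hlim : Tendsto (fun x => x * deriv f x / f x) (𝓝[>] 0) (𝓝 α)) (ha : a < α) (hb : α < b) :
    ∃ ρ₀ > 0, ∀ x ∈ Ioc 0 ρ₀, a * f x ≤ x * deriv f x ∧ x * deriv f x ≤ b * f x := by
  obtain ⟨ρ₀, hρ₀, hsub⟩ := mem_nhdsGT_iff_exists_Ioc_subset.1 (hlim (Ioo_mem_nhds ha hb))
  refine ⟨ρ₀, hρ₀, fun x hx => ?_⟩
  obtain ⟨hax, hxb⟩ := hsub hx
  exact ⟨((lt_div_iff₀ (hpos x hx.1)).1 hax).le, ((div_lt_iff₀ (hpos x hx.1)).1 hxb).le⟩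

theorem hasDerivAt_mul_rpow_neg {f : ℝ → ℝ} {f' β x : ℝ} (hf : HasDerivAt f f' x) (hx : 0 < x) :
    HasDerivAt (fun y => f y * y ^ (-β)) (x ^ (-β - 1) * (x * f' - β * f x)) x := by
  refine (hf.mul (hasDerivAt_rpow_const (Or.inl hx.ne'))).congr_deriv ?_
  rw [show x ^ (-β) = x ^ (-β - 1) * x by rw [← rpow_add_one hx.ne']; ring_nf]
  ring

theorem antitoneOn_mul_rpow_neg_of_mul_deriv_le {f : ℝ → ℝ} {β : ℝ} {s : Set ℝ}
    (hs : Convex ℝ s) (hs0 : s ⊆ Ioi 0) (hf : ∀ x ∈ s, DifferentiableAt ℝ f x)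
    (hle : ∀ x ∈ s, x * deriv f x ≤ β * f x) :
    AntitoneOn (fun x => f x * x ^ (-β)) s := by
  have hderiv : ∀ x ∈ s, HasDerivAt (fun y => f y * y ^ (-β))
      (x ^ (-β - 1) * (x * deriv f x - β * f x)) x := fun x hx =>
    hasDerivAt_mul_rpow_neg (hf x hx).hasDerivAt (hs0 hx)
  refine antitoneOn_of_deriv_nonpos hs
    (fun x hx => (hderiv x hx).continuousAt.continuousWithinAt)
    (fun x hx => (hderiv x (interior_subset hx)).differentiableAt.differentiableWithinAt)
    fun x hx => ?_
  have hx := interior_subset hx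
  rw [(hderiv x hx).deriv]
  exact mul_nonpos_of_nonneg_of_nonpos (rpow_pos_of_pos (hs0 hx) _).le
    (sub_nonpos.2 (hle x hx))

theorem le_of_antitoneOn_mul_rpow_neg {f : ℝ → ℝ} {β b x : ℝ} (hx : x ∈ Ioc 0 b)
    (hanti : AntitoneOn (fun x => f x * x ^ (-β)) (Ioc 0 b)) :
    f b * b ^ (-β) * x ^ β ≤ f x := by
  have hb : b ∈ Ioc 0 b := ⟨hx.1.trans_le hx.2, le_rfl⟩
  calc f b * b ^ (-β) * x ^ β ≤ f x * x ^ (-β) * x ^ β :=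
        mul_le_mul_of_nonneg_right (hanti hx hb hx.2) (rpow_nonneg hx.1.le _)
    _ = f x := by rw [mul_assoc, ← rpow_add hx.1, neg_add_cancel, rpow_zero, mul_one]

theorem mul_mul_sqrt_mul_rpow_le {a c β x m d : ℝ} (ha : 0 ≤ a) (hc : 0 ≤ c) (hx : 0 < x)
    (hm : c * x ^ β ≤ m) (hd : a * m ≤ x * d) :
    a * c * √c * x ^ (3 * β / 2 - 2) ≤ √m * d / x := by
  have hsqrt : √c * x ^ (β / 2) ≤ √m := by
    rw [show β / 2 = β * (1 / 2) by ring, rpow_mul hx.le, ← sqrt_eq_rpow, ← sqrt_mul hc]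
    exact sqrt_le_sqrt hm
  calc a * c * √c * x ^ (3 * β / 2 - 2) = (√c * x ^ (β / 2)) * (a * (c * x ^ β)) / x ^ 2 := by
        rw [rpow_sub hx, rpow_two, show 3 * β / 2 = β / 2 + β by ring, rpow_add hx]; ring
    _ ≤ √m * (x * d) / x ^ 2 := by
        gcongr ?_ * ?_ / _
        exact (mul_le_mul_of_nonneg_left hm ha).trans hd
    _ = √m * d / x := by field_simp

theorem stmt12_general (μ : ℝ → ℝ)
    (hC1 : ContDiffOn ℝ 1 μ (Set.Ioi 0))
    (hpos : ∀ ρ > (0:ℝ), 0 < μ ρ)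
    (α : ℝ) (hα1 : 2 / 3 < α)
    (hvac : Tendsto (fun ρ => ρ * deriv μ ρ / μ ρ) (nhdsWithin 0 (Set.Ioi 0)) (nhds α)) :
    ∃ σ > (0:ℝ), ∃ C > (0:ℝ), ∃ ρ₀ > (0:ℝ), ∀ ρ ∈ Set.Ioc (0:ℝ) ρ₀,
      Real.sqrt (μ ρ) * deriv μ ρ / ρ ≥ C * ρ ^ (σ - 1) := by
  have hα0 : 0 < α := by linarith
  obtain ⟨ρ₀, hρ₀, hbounds⟩ :=
    exists_forall_Ioc_mul_le_mul_deriv_le hpos hvac (half_lt_self hα0) (by linarith : α < 2 * α)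
  have hdiff : ∀ x ∈ Ioc 0 ρ₀, DifferentiableAt ℝ μ x := fun x hx =>
    (hC1.differentiableOn one_ne_zero).differentiableAt (Ioi_mem_nhds hx.1)
  have hanti := antitoneOn_mul_rpow_neg_of_mul_deriv_le (convex_Ioc 0 ρ₀) Ioc_subset_Ioi_self
    hdiff fun x hx => (hbounds x hx).2
  set c := μ ρ₀ * ρ₀ ^ (-(2 * α))
  have hc : 0 < c := mul_pos (hpos ρ₀ hρ₀) (rpow_pos_of_pos hρ₀ _)
  refine ⟨3 * α - 1, by linarith, α / 2 * c * √c, by positivity, ρ₀, hρ₀, fun ρ hρ => ?_⟩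
  have h := mul_mul_sqrt_mul_rpow_le (half_pos hα0).le hc.le hρ.1
    (le_of_antitoneOn_mul_rpow_neg hρ hanti) (hbounds ρ hρ).1
  rwa [show 3 * (2 * α) / 2 - 2 = 3 * α - 1 - 1 by ring] at h

/-- If `μ` satisfies the vacuum condition with exponent `α ∈ (2/3, 4]`, then
near `0` the derivative `Z'(ρ) = √(μ(ρ)) μ'(ρ)/ρ` is bounded below by `C ρ^{σ−1}` for some
`σ > 0`. -/
theorem stmt12 (μ : ℝ → ℝ)
    (hcont : ContinuousOn μ (Set.Ici 0))
    (hC1 : ContDiffOn ℝ 1 μ (Set.Ioi 0))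
    (hpos : ∀ ρ > (0:ℝ), 0 < μ ρ) (hpos' : ∀ ρ > (0:ℝ), 0 < deriv μ ρ)
    (α : ℝ) (hα1 : 2 / 3 < α) (hα2 : α ≤ 4)
    (hvac : Tendsto (fun ρ => ρ * deriv μ ρ / μ ρ) (nhdsWithin 0 (Set.Ioi 0)) (nhds α)) :
    ∃ σ > (0:ℝ), ∃ C > (0:ℝ), ∃ ρ₀ > (0:ℝ), ∀ ρ ∈ Set.Ioc (0:ℝ) ρ₀,
      Real.sqrt (μ ρ) * deriv μ ρ / ρ ≥ C * ρ ^ (σ - 1) :=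
  stmt12_general μ hC1 hpos α hα1 hvac
end
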